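/- arXiv:2410.18602 — 2 statements merged into one kernel-verified Lean document; each statement's English description precedes it below -/
import Mathlib

section
/- PDA is incentive compatible: for every buyer i with true type θ_i, every report θ'_i with r'_i ⊆ r_i, every report profile θ'_{-i} of the others, and every order o ∈ O(V), u_i^o(θ_i, (θ_i, θ'_{-i})) ≥ u_i^o(θ_i, (θ'_i, θ'_{-i})); consequently truthful reporting maximizes i's expected utility over the uniformly random order. -/
namespace DA

open scoped Classical

/-- A report profile for selling `k` homogeneous items: each agent reports a
valuation over quantities `0, …, k` and a set of neighbors. -/
structure Profile (V : Type*) (k : ℕ) where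
  val : V → ℕ → ℝ
  nbr : V → Set V

/-- A valuation is valid if it is normalized (`v 0 = 0`) and has
non-increasing marginals on `{0, …, k}`. -/
def ValidVal (k : ℕ) (v : ℕ → ℝ) : Prop :=
  v 0 = 0 ∧ ∀ q : ℕ, q + 2 ≤ k → v (q + 2) - v (q + 1) ≤ v (q + 1) - v q

variable {V : Type*}

/-- A profile is valid (w.r.t. seller `s`) if every buyer's valuation is valid. -/
def Profile.Valid {k : ℕ} (θ : Profile V k) (s : V) : Prop :=
  ∀ i : V, i ≠ s → ValidVal k (θ.val i)

/-- The reported (undirected) adjacency: `{i, j}` is an edge whenever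
`j ∈ r'_i` (or symmetrically `i ∈ r'_j`). -/
def Profile.adj {k : ℕ} (θ : Profile V k) (i j : V) : Prop :=
  j ∈ θ.nbr i ∨ i ∈ θ.nbr j

/-- The feasible set `F(θ', B)` of a coalition `B`: the buyers in `B` that are
connected to the seller `s` by a path of reported edges lying inside `B`
(empty if `s ∉ B`). -/
def Profile.feasible {k : ℕ} (θ : Profile V k) (s : V) (B : Set V) : Set V :=
  {i | i ≠ s ∧ i ∈ B ∧ s ∈ B ∧
    Relation.ReflTransGen (fun a b => θ.adj a b ∧ a ∈ B ∧ b ∈ B) s i}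

/-- Updating agent `i`'s report in a profile. -/
def updateAgent [DecidableEq V] {k : ℕ} (θ : Profile V k) (i : V)
    (v : ℕ → ℝ) (r : Set V) : Profile V k :=
  ⟨Function.update θ.val i v, Function.update θ.nbr i r⟩

/-- The profile `θ'_B` obtained by removing (setting to nil) the reports of
all agents outside the coalition `B`. -/
noncomputable def Profile.restrict {k : ℕ} (θ : Profile V k) (B : Set V) : Profile V k :=
  ⟨fun i q => if i ∈ B then θ.val i q else 0,
   fun i => if i ∈ B then θ.nbr i ∩ B else ∅⟩

section Homogeneous

variable [Fintype V] [DecidableEq V]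

/-- Social welfare of an allocation `π` under reports `θ`. -/
def SW {k : ℕ} (θ : Profile V k) (s : V) (π : V → ℕ) : ℝ :=
  ∑ i ∈ Finset.univ.erase s, θ.val i (π i)

/-- The allocations admissible for a coalition `B` with irrevocable prior
allocation `πhat`: at most `k` items in total are allocated (none to the
seller), only buyers in `F(θ, B)` receive items, and nobody receives fewer
items than in `πhat`. -/
def feasAllocs {k : ℕ} (θ : Profile V k) (s : V) (B : Set V) (πhat : V → ℕ) :
    Set (V → ℕ) :=
  {π | π s = 0 ∧ (∑ i ∈ Finset.univ.erase s, π i) ≤ k ∧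
    (∀ i, i ∉ θ.feasible s B → π i = 0) ∧ ∀ j, j ≠ s → πhat j ≤ π j}

/-- `SW*(θ, B, πhat)`: the maximum social welfare over the admissible
allocations for coalition `B` with prior allocation `πhat`. -/
noncomputable def SWstar {k : ℕ} (θ : Profile V k) (s : V) (B : Set V)
    (πhat : V → ℕ) : ℝ :=
  sSup (SW θ s '' feasAllocs θ s B πhat)

/-- A chosen allocation attaining `SW*(θ, B, πhat)`. -/
noncomputable def bestAlloc {k : ℕ} (θ : Profile V k) (s : V) (B : Set V)
    (πhat : V → ℕ) : V → ℕ :=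
  Classical.epsilon fun π =>
    π ∈ feasAllocs θ s B πhat ∧ SW θ s π = SWstar θ s B πhat

/-- `o_{≺i}`: the set of agents strictly preceding `i` in the order `o`. -/
def pred (o : V ≃ Fin (Fintype.card V)) (i : V) : Set V := {j | o j < o i}

/-- `o_{≼i} = o_{≺i} ∪ {i}`. -/
def predeq (o : V ≃ Fin (Fintype.card V)) (i : V) : Set V := {j | o j ≤ o i}

/-- The partial allocation produced by PDA after the first `t` agents of the
order `o` have been traversed: the seller is skipped, and each traversed buyer
`i` receives her share in a chosen allocation attaining
`SW*(θ, o_{≼i}, π^{o≺i})`, earlier allocations being irrevocable. -/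
noncomputable def pdaStep {k : ℕ} (θ : Profile V k) (s : V)
    (o : V ≃ Fin (Fintype.card V)) : ℕ → V → ℕ
  | 0 => fun _ => 0
  | t + 1 =>
    if h : t < Fintype.card V then
      let i := o.symm ⟨t, h⟩
      if i = s then pdaStep θ s o t
      else Function.update (pdaStep θ s o t) i
        (bestAlloc θ s (predeq o i) (pdaStep θ s o t) i)
    else pdaStep θ s o t

/-- `π^{o≺i}`: the allocation fixed by PDA right before agent `i` is traversed. -/
noncomputable def pdaPrior {k : ℕ} (θ : Profile V k) (s : V)
    (o : V ≃ Fin (Fintype.card V)) (i : V) : V → ℕ :=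
  pdaStep θ s o (o i : ℕ)

/-- The final allocation `π^o` produced by PDA under the order `o`. -/
noncomputable def pdaAlloc {k : ℕ} (θ : Profile V k) (s : V)
    (o : V ≃ Fin (Fintype.card V)) : V → ℕ :=
  pdaStep θ s o (Fintype.card V)

/-- The payment charged by PDA to agent `i` under the order `o`:
`p_i = SW*(θ, o_{≺i}, π^{o≺i}) − SW*(θ, o_{≼i}, π^{o≺i}) + v'_i(π_i)`, except
that agents traversed after all `k` items have been allocated pay `0`
(and the seller pays nothing). -/
noncomputable def pdaPay {k : ℕ} (θ : Profile V k) (s : V)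
    (o : V ≃ Fin (Fintype.card V)) (i : V) : ℝ :=
  if i = s then 0
  else if (∑ j ∈ Finset.univ.erase s, pdaPrior θ s o i j) = k then 0
  else SWstar θ s (pred o i) (pdaPrior θ s o i)
    - SWstar θ s (predeq o i) (pdaPrior θ s o i)
    + θ.val i (pdaAlloc θ s o i)

/-- `u_i^o`: the utility of buyer `i` with true valuation `v` under order `o`. -/
noncomputable def pdaUtil {k : ℕ} (v : ℕ → ℝ) (θ : Profile V k) (s : V)
    (o : V ≃ Fin (Fintype.card V)) (i : V) : ℝ :=
  v (pdaAlloc θ s o i) - pdaPay θ s o i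

/-- `E_PDA(u_i)`: buyer `i`'s expected utility over the uniformly random order. -/
noncomputable def pdaExpUtil {k : ℕ} (v : ℕ → ℝ) (θ : Profile V k) (s : V)
    (i : V) : ℝ :=
  (∑ o : V ≃ Fin (Fintype.card V), pdaUtil v θ s o i) /
    ((Fintype.card V).factorial : ℝ)

/-- `μ(θ)`: the fraction of orders for which PDA terminates with no item sold. -/
noncomputable def mu {k : ℕ} (θ : Profile V k) (s : V) : ℝ :=
  (Nat.card {o : V ≃ Fin (Fintype.card V) // ∀ j, pdaAlloc θ s o j = 0} : ℝ) /
    ((Fintype.card V).factorial : ℝ)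

/-- The Shapley contribution `φ_i(θ)` of agent `i`. -/
noncomputable def shapley {k : ℕ} (θ : Profile V k) (s : V) (i : V) : ℝ :=
  ∑ B ∈ (Finset.univ.erase i).powerset,
    ((B.card.factorial * (Fintype.card V - B.card - 1).factorial : ℝ) /
      ((Fintype.card V).factorial : ℝ)) *
    (SWstar θ s (↑(insert i B)) 0 - SWstar θ s (↑B) 0)

end Homogeneous

end DA

/-!
Buyer `i`'s report affects neither the allocation `π^{o≺i}` fixed before her turn nor
`SW*(θ', o_{≺i}, π^{o≺i})`, since she lies outside `o_{≺i}`. If items remain when she is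
reached, her utility is a Clarke pivot identity: the true welfare `SW(θ, π)` of the allocation
`π` chosen at her turn minus `SW*(θ, o_{≺i}, π^{o≺i})`. Hiding neighbours only removes edges, so
the `π` chosen under a misreport is still admissible for the truthful report, under which
`π` maximizes exactly this welfare.
-/

namespace DA

section Profiles

variable {V : Type*} {k : ℕ}

/-- `val_zero` is needed because `SW` counts `v_i(0)` even for coalitions without `i`. -/
structure Profile.EqExcept (θ₁ θ₂ : Profile V k) (i : V) : Prop where
  val_eq : ∀ j, j ≠ i → θ₁.val j = θ₂.val j
  val_zero : θ₁.val i 0 = θ₂.val i 0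
  nbr_eq : ∀ j, j ≠ i → θ₁.nbr j = θ₂.nbr j

theorem Profile.feasible_subset (θ : Profile V k) (s : V) (B : Set V) : θ.feasible s B ⊆ B :=
  fun _ h => h.2.1

theorem Profile.feasible_mono {θ₁ θ₂ : Profile V k} {s : V} {B₁ B₂ : Set V} (hB : B₁ ⊆ B₂)
    (hadj : ∀ a b, a ∈ B₁ → b ∈ B₁ → θ₁.adj a b → θ₂.adj a b) :
    θ₁.feasible s B₁ ⊆ θ₂.feasible s B₂ := by
  rintro x ⟨hxs, hxB, hsB, hpath⟩
  exact ⟨hxs, hB hxB, hB hsB, Relation.ReflTransGen.mono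
    (fun a b ⟨hab, ha, hb⟩ => ⟨hadj a b ha hb hab, hB ha, hB hb⟩) _ _ hpath⟩

theorem Profile.feasible_congr {θ₁ θ₂ : Profile V k} {s i : V} {B : Set V} (hiB : i ∉ B)
    (hnbr : ∀ j, j ≠ i → θ₁.nbr j = θ₂.nbr j) : θ₁.feasible s B = θ₂.feasible s B := by
  have hadj : ∀ a b, a ∈ B → b ∈ B → (θ₁.adj a b ↔ θ₂.adj a b) := fun a b ha hb => by
    simp only [Profile.adj, hnbr a (ne_of_mem_of_not_mem ha hiB),
      hnbr b (ne_of_mem_of_not_mem hb hiB)]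
  exact (feasible_mono le_rfl fun a b ha hb => (hadj a b ha hb).1).antisymm
    (feasible_mono le_rfl fun a b ha hb => (hadj a b ha hb).2)

variable [DecidableEq V]

theorem updateAgent_val_self (θ : Profile V k) (i : V) (v : ℕ → ℝ) (r : Set V) :
    (updateAgent θ i v r).val i = v :=
  Function.update_self ..

theorem updateAgent_eqExcept (θ : Profile V k) (i : V) {v v' : ℕ → ℝ} (r r' : Set V)
    (h0 : v 0 = v' 0) : (updateAgent θ i v r).EqExcept (updateAgent θ i v' r') i where
  val_eq j hj := by simp only [updateAgent, Function.update_of_ne hj]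
  val_zero := by simpa only [updateAgent, Function.update_self] using h0
  nbr_eq j hj := by simp only [updateAgent, Function.update_of_ne hj]

theorem updateAgent_adj_of_subset (θ : Profile V k) (i : V) (v v' : ℕ → ℝ) {r r' : Set V}
    (hr : r' ⊆ r) {a b : V} (h : (updateAgent θ i v' r').adj a b) :
    (updateAgent θ i v r).adj a b := by
  have hnbr : ∀ c, (updateAgent θ i v' r').nbr c ⊆ (updateAgent θ i v r).nbr c := by
    intro c
    rcases eq_or_ne c i with rfl | hc
    · simpa only [updateAgent, Function.update_self] using hr
    · simp only [updateAgent, Function.update_of_ne hc, subset_refl]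
  exact h.imp (fun h => hnbr a h) (fun h => hnbr b h)

end Profiles

section Welfare

variable {V : Type*} [Fintype V] [DecidableEq V] {k : ℕ}

theorem feasAllocs_mono {θ₁ θ₂ : Profile V k} {s : V} {B₁ B₂ : Set V} {πhat : V → ℕ}
    (h : θ₁.feasible s B₁ ⊆ θ₂.feasible s B₂) :
    feasAllocs θ₁ s B₁ πhat ⊆ feasAllocs θ₂ s B₂ πhat :=
  fun _ ⟨hs, hsum, hsupp, hge⟩ => ⟨hs, hsum, fun j hj => hsupp j fun hf => hj (h hf), hge⟩

theorem feasAllocs_congr {θ₁ θ₂ : Profile V k} {s i : V} {B : Set V} {πhat : V → ℕ}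
    (h : θ₁.EqExcept θ₂ i) (hiB : i ∉ B) : feasAllocs θ₁ s B πhat = feasAllocs θ₂ s B πhat := by
  simp only [feasAllocs, Profile.feasible_congr hiB h.nbr_eq]

theorem mem_feasAllocs_self_of_le {θ : Profile V k} {s : V} {B : Set V} {πhat σ π : V → ℕ}
    (hσ : σ ∈ feasAllocs θ s B πhat) (hπ : π ≤ σ) : π ∈ feasAllocs θ s B π := by
  obtain ⟨hs, hsum, hsupp, -⟩ := hσ
  exact ⟨Nat.eq_zero_of_le_zero (hs ▸ hπ s), (Finset.sum_le_sum fun j _ => hπ j).trans hsum,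
    fun j hj => Nat.eq_zero_of_le_zero (hsupp j hj ▸ hπ j), fun _ _ => le_rfl⟩

theorem eq_zero_of_mem_feasAllocs_of_notMem {θ : Profile V k} {s i : V} {B : Set V}
    {πhat π : V → ℕ} (hπ : π ∈ feasAllocs θ s B πhat) (hiB : i ∉ B) : π i = 0 :=
  hπ.2.2.1 i fun hf => hiB (θ.feasible_subset s B hf)

theorem eq_of_mem_feasAllocs_of_sum_eq {θ : Profile V k} {s : V} {B : Set V} {πhat π : V → ℕ}
    (hsum : ∑ j ∈ Finset.univ.erase s, πhat j = k) (hπ : π ∈ feasAllocs θ s B πhat)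
    {j : V} (hj : j ≠ s) : π j = πhat j := by
  have hge : ∀ j ∈ Finset.univ.erase s, πhat j ≤ π j :=
    fun j hj => hπ.2.2.2 j (Finset.ne_of_mem_erase hj)
  have hsum_eq := le_antisymm (Finset.sum_le_sum hge) (hsum ▸ hπ.2.1)
  exact ((Finset.sum_eq_sum_iff_of_le hge).mp hsum_eq j (Finset.mem_erase.mpr ⟨hj, by simp⟩)).symm

theorem feasAllocs_finite (θ : Profile V k) (s : V) (B : Set V) (πhat : V → ℕ) :
    (feasAllocs θ s B πhat).Finite := by
  refine (Set.finite_Iic fun _ => k).subset fun π ⟨hs, hsum, _, _⟩ a => ?_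
  rcases eq_or_ne a s with rfl | ha
  · simp [hs]
  · exact (Finset.single_le_sum (fun j _ => Nat.zero_le (π j))
      (Finset.mem_erase.mpr ⟨ha, Finset.mem_univ a⟩)).trans hsum

theorem le_SWstar {θ : Profile V k} {s : V} {B : Set V} {πhat π : V → ℕ}
    (hπ : π ∈ feasAllocs θ s B πhat) : SW θ s π ≤ SWstar θ s B πhat :=
  le_csSup ((feasAllocs_finite θ s B πhat).image _).bddAbove ⟨π, hπ, rfl⟩

theorem bestAlloc_spec {θ : Profile V k} {s : V} {B : Set V} {πhat : V → ℕ}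
    (hne : (feasAllocs θ s B πhat).Nonempty) :
    bestAlloc θ s B πhat ∈ feasAllocs θ s B πhat ∧
      SW θ s (bestAlloc θ s B πhat) = SWstar θ s B πhat :=
  Classical.epsilon_spec ((hne.image (SW θ s)).csSup_mem
    ((feasAllocs_finite θ s B πhat).image (SW θ s)))

theorem SW_congr {θ₁ θ₂ : Profile V k} {s i : V} (hval : ∀ j, j ≠ i → θ₁.val j = θ₂.val j)
    (h0 : θ₁.val i 0 = θ₂.val i 0) {π : V → ℕ} (hπi : π i = 0) : SW θ₁ s π = SW θ₂ s π := by
  refine Finset.sum_congr rfl fun j _ => ?_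
  rcases eq_or_ne j i with rfl | hj
  · rw [hπi, h0]
  · rw [hval j hj]

theorem SW_add_val_sub_val {θ₁ θ₂ : Profile V k} {s i : V} (hi : i ≠ s)
    (hval : ∀ j, j ≠ i → θ₁.val j = θ₂.val j) (π : V → ℕ) :
    SW θ₂ s π + θ₁.val i (π i) - θ₂.val i (π i) = SW θ₁ s π := by
  have hmem : i ∈ Finset.univ.erase s := Finset.mem_erase.mpr ⟨hi, Finset.mem_univ i⟩
  have hothers : ∑ j ∈ (Finset.univ.erase s).erase i, θ₂.val j (π j)
      = ∑ j ∈ (Finset.univ.erase s).erase i, θ₁.val j (π j) :=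
    Finset.sum_congr rfl fun j hj => by rw [hval j (Finset.ne_of_mem_erase hj)]
  simp only [SW, ← Finset.add_sum_erase _ _ hmem, hothers]
  ring

theorem SWstar_congr {θ₁ θ₂ : Profile V k} {s i : V} {B : Set V} {πhat : V → ℕ}
    (h : θ₁.EqExcept θ₂ i) (hiB : i ∉ B) : SWstar θ₁ s B πhat = SWstar θ₂ s B πhat := by
  rw [SWstar, SWstar, ← feasAllocs_congr h hiB]
  exact congrArg sSup (Set.image_congr fun π hπ =>
    SW_congr h.val_eq h.val_zero (eq_zero_of_mem_feasAllocs_of_notMem hπ hiB))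

theorem bestAlloc_congr {θ₁ θ₂ : Profile V k} {s i : V} {B : Set V} {πhat : V → ℕ}
    (h : θ₁.EqExcept θ₂ i) (hiB : i ∉ B) : bestAlloc θ₁ s B πhat = bestAlloc θ₂ s B πhat := by
  rw [bestAlloc, bestAlloc, SWstar_congr h hiB, feasAllocs_congr h hiB]
  congr 1
  funext π
  exact propext <| and_congr_right fun hπ => by
    rw [SW_congr h.val_eq h.val_zero (eq_zero_of_mem_feasAllocs_of_notMem hπ hiB)]

end Welfare

section Traversal

variable {V : Type*} [Fintype V] [DecidableEq V] {k : ℕ}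
variable (θ : Profile V k) (s : V) (o : V ≃ Fin (Fintype.card V))

/-- The allocation attaining `SW*(θ, o_{≼i}, π^{o≺i})`; buyer `i` receives its `i`-th entry. -/
noncomputable def pdaChoice (i : V) : V → ℕ :=
  bestAlloc θ s (predeq o i) (pdaPrior θ s o i)

theorem pdaStep_succ_of_card_le {t : ℕ} (ht : Fintype.card V ≤ t) :
    pdaStep θ s o (t + 1) = pdaStep θ s o t := by
  rw [pdaStep, dif_neg ht.not_gt]

theorem pdaStep_order_succ (j : V) :
    pdaStep θ s o (o j + 1) =
      if j = s then pdaStep θ s o (o j)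
      else Function.update (pdaStep θ s o (o j)) j
        (bestAlloc θ s (predeq o j) (pdaStep θ s o (o j)) j) := by
  rw [pdaStep, dif_pos (o j).isLt]
  simp only [Fin.eta, Equiv.symm_apply_apply]

theorem pdaStep_succ_apply_of_ne {t : ℕ} {j : V} (hj : (o j : ℕ) ≠ t) :
    pdaStep θ s o (t + 1) j = pdaStep θ s o t j := by
  rcases lt_or_ge t (Fintype.card V) with ht | ht
  · obtain ⟨j', rfl⟩ : ∃ j', (o j' : ℕ) = t := ⟨o.symm ⟨t, ht⟩, by simp⟩
    rw [pdaStep_order_succ]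
    split_ifs
    · rfl
    · exact Function.update_of_ne (fun e => hj (by rw [e])) _ _
  · rw [pdaStep_succ_of_card_le θ s o ht]

theorem pdaAlloc_apply (i : V) : pdaAlloc θ s o i = pdaStep θ s o (o i + 1) i := by
  suffices ∀ t, (o i : ℕ) + 1 ≤ t → pdaStep θ s o t i = pdaStep θ s o (o i + 1) i from
    this _ (o i).isLt
  intro t ht
  induction t, ht using Nat.le_induction with
  | base => rfl
  | succ t ht ih => rw [pdaStep_succ_apply_of_ne θ s o (by omega), ih]

theorem pdaAlloc_eq_pdaChoice {i : V} (hi : i ≠ s) : pdaAlloc θ s o i = pdaChoice θ s o i i := by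
  rw [pdaAlloc_apply, pdaStep_order_succ, if_neg hi, Function.update_self]
  rfl

theorem pdaStep_mem_feasAllocs (t : ℕ) :
    pdaStep θ s o t ∈ feasAllocs θ s {a | (o a : ℕ) < t} (pdaStep θ s o t) := by
  induction t with
  | zero => exact ⟨rfl, by simp [pdaStep], fun _ _ => rfl, fun _ _ => le_rfl⟩
  | succ t ih =>
    have hmono : feasAllocs θ s {a | (o a : ℕ) < t} (pdaStep θ s o t)
        ⊆ feasAllocs θ s {a | (o a : ℕ) < t + 1} (pdaStep θ s o t) :=
      feasAllocs_mono (θ.feasible_mono (fun _ ha => Nat.lt_succ_of_lt ha) fun _ _ _ _ h => h)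
    rcases lt_or_ge t (Fintype.card V) with ht | ht
    · obtain ⟨j, rfl⟩ : ∃ j, (o j : ℕ) = t := ⟨o.symm ⟨t, ht⟩, by simp⟩
      have hB : predeq o j = {a | (o a : ℕ) < o j + 1} :=
        Set.ext fun _ => Fin.le_def.trans Nat.lt_succ_iff.symm
      rw [pdaStep_order_succ, hB]
      split_ifs with hj
      · exact hmono ih
      · obtain ⟨hmem, -⟩ := bestAlloc_spec ⟨_, hmono ih⟩
        refine mem_feasAllocs_self_of_le hmem fun a => ?_
        rcases eq_or_ne a j with rfl | ha
        · rw [Function.update_self]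
        · rw [Function.update_of_ne ha]
          rcases eq_or_ne a s with rfl | has
          · rw [ih.1]
            exact Nat.zero_le _
          · exact hmem.2.2.2 a has
    · rw [pdaStep_succ_of_card_le θ s o ht]
      exact hmono ih

variable {θ s o}

theorem pdaPrior_mem_feasAllocs (i : V) :
    pdaPrior θ s o i ∈ feasAllocs θ s (predeq o i) (pdaPrior θ s o i) :=
  feasAllocs_mono (θ.feasible_mono (fun a (ha : (o a : ℕ) < o i) => Fin.le_def.mpr ha.le)
    fun _ _ _ _ h => h) (pdaStep_mem_feasAllocs θ s o (o i))

theorem pdaPrior_self (i : V) : pdaPrior θ s o i i = 0 :=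
  eq_zero_of_mem_feasAllocs_of_notMem (pdaStep_mem_feasAllocs θ s o (o i)) (lt_irrefl (o i : ℕ))

theorem pdaChoice_spec (i : V) :
    pdaChoice θ s o i ∈ feasAllocs θ s (predeq o i) (pdaPrior θ s o i) ∧
      SW θ s (pdaChoice θ s o i) = SWstar θ s (predeq o i) (pdaPrior θ s o i) :=
  bestAlloc_spec ⟨_, pdaPrior_mem_feasAllocs i⟩

theorem pdaStep_congr {θ₁ θ₂ : Profile V k} {i : V} (h : θ₁.EqExcept θ₂ i) {t : ℕ}
    (ht : t ≤ o i) : pdaStep θ₁ s o t = pdaStep θ₂ s o t := by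
  induction t with
  | zero => rfl
  | succ t ih =>
    have := (o i).isLt
    obtain ⟨j, rfl⟩ : ∃ j, (o j : ℕ) = t := ⟨o.symm ⟨t, by omega⟩, by simp⟩
    have hiB : i ∉ predeq o j := fun hij : o i ≤ o j => by rw [Fin.le_def] at hij; omega
    rw [pdaStep_order_succ, pdaStep_order_succ, ih (by omega), bestAlloc_congr h hiB]

theorem pdaPrior_congr {θ₁ θ₂ : Profile V k} {i : V} (h : θ₁.EqExcept θ₂ i) :
    pdaPrior θ₁ s o i = pdaPrior θ₂ s o i :=
  pdaStep_congr h le_rfl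

theorem pdaUtil_of_sum_pdaPrior_eq (v : ℕ → ℝ) {i : V} (hi : i ≠ s)
    (hsold : ∑ j ∈ Finset.univ.erase s, pdaPrior θ s o i j = k) : pdaUtil v θ s o i = v 0 := by
  have hzero : pdaAlloc θ s o i = 0 := by
    rw [pdaAlloc_eq_pdaChoice θ s o hi,
      eq_of_mem_feasAllocs_of_sum_eq hsold (pdaChoice_spec i).1 hi, pdaPrior_self]
  rw [pdaUtil, pdaPay, if_neg hi, if_pos hsold, hzero, sub_zero]

theorem pdaUtil_of_sum_pdaPrior_ne (v : ℕ → ℝ) {i : V} (hi : i ≠ s)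
    (hleft : ∑ j ∈ Finset.univ.erase s, pdaPrior θ s o i j ≠ k) :
    pdaUtil v θ s o i = v (pdaChoice θ s o i i) - θ.val i (pdaChoice θ s o i i)
      + SW θ s (pdaChoice θ s o i) - SWstar θ s (pred o i) (pdaPrior θ s o i) := by
  rw [pdaUtil, pdaPay, if_neg hi, if_neg hleft, pdaAlloc_eq_pdaChoice θ s o hi,
    (pdaChoice_spec i).2]
  ring

theorem pdaUtil_le_truthful {θ' : Profile V k} {i : V} (h : θ.EqExcept θ' i)
    (hadj : ∀ a b, θ'.adj a b → θ.adj a b) (hi : i ≠ s) :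
    pdaUtil (θ.val i) θ' s o i ≤ pdaUtil (θ.val i) θ s o i := by
  have hprior : pdaPrior θ s o i = pdaPrior θ' s o i := pdaPrior_congr h
  by_cases hsold : ∑ j ∈ Finset.univ.erase s, pdaPrior θ s o i j = k
  · rw [pdaUtil_of_sum_pdaPrior_eq _ hi hsold, pdaUtil_of_sum_pdaPrior_eq _ hi (hprior ▸ hsold)]
  rw [pdaUtil_of_sum_pdaPrior_ne _ hi hsold, pdaUtil_of_sum_pdaPrior_ne _ hi (hprior ▸ hsold)]
  set c' := pdaChoice θ' s o i
  have hwelfare := SW_add_val_sub_val hi h.val_eq c'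
  have hpivot : SWstar θ' s (pred o i) (pdaPrior θ' s o i)
      = SWstar θ s (pred o i) (pdaPrior θ s o i) := by
    rw [← hprior, SWstar_congr h (lt_irrefl (o i))]
  have hadmissible : c' ∈ feasAllocs θ s (predeq o i) (pdaPrior θ s o i) := by
    rw [hprior]
    exact feasAllocs_mono (θ'.feasible_mono le_rfl fun a b _ _ => hadj a b) (pdaChoice_spec i).1
  have hopt := le_SWstar hadmissible
  rw [← (pdaChoice_spec i).2] at hopt
  linarith

end Traversal

end DA

theorem pda_IC_general {V : Type*} [Fintype V] [DecidableEq V]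
    {k : ℕ} (θ : DA.Profile V k) (s : V)
    (i : V) (hi : i ≠ s)
    (v v' : ℕ → ℝ) (r r' : Set V) (hr : r' ⊆ r)
    (hv : DA.ValidVal k v) (hv' : DA.ValidVal k v') :
    (∀ o : V ≃ Fin (Fintype.card V),
        DA.pdaUtil v (DA.updateAgent θ i v r) s o i
          ≥ DA.pdaUtil v (DA.updateAgent θ i v' r') s o i)
    ∧ DA.pdaExpUtil v (DA.updateAgent θ i v r) s i
        ≥ DA.pdaExpUtil v (DA.updateAgent θ i v' r') s i := by
  have hEq := DA.updateAgent_eqExcept θ i r r' (hv.1.trans hv'.1.symm)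
  have hutil : ∀ o : V ≃ Fin (Fintype.card V),
      DA.pdaUtil v (DA.updateAgent θ i v' r') s o i ≤ DA.pdaUtil v (DA.updateAgent θ i v r) s o i :=
    fun o => by
      simpa only [DA.updateAgent_val_self] using DA.pdaUtil_le_truthful (o := o) hEq
        (fun a b => DA.updateAgent_adj_of_subset θ i v v' hr) hi
  exact ⟨hutil, div_le_div_of_nonneg_right (Finset.sum_le_sum fun o _ => hutil o)
    (Nat.cast_nonneg _)⟩

/-- PDA is incentive compatible: for every buyer i with true type
θ_i = (v, r), every report θ'_i = (v', r') with r' ⊆ r, every report profile of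
the others (recorded in θ), and every order o,
u_i^o(θ_i, (θ_i, θ'_{-i})) ≥ u_i^o(θ_i, (θ'_i, θ'_{-i})); consequently truthful
reporting maximizes i's expected utility over the uniformly random order. -/
theorem pda_IC {V : Type*} [Fintype V] [DecidableEq V]
    {k : ℕ} (hk : 1 ≤ k) (θ : DA.Profile V k) (s : V) (hθ : θ.Valid s)
    (i : V) (hi : i ≠ s)
    (v v' : ℕ → ℝ) (r r' : Set V) (hr : r' ⊆ r)
    (hv : DA.ValidVal k v) (hv' : DA.ValidVal k v') :
    (∀ o : V ≃ Fin (Fintype.card V),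
        DA.pdaUtil v (DA.updateAgent θ i v r) s o i
          ≥ DA.pdaUtil v (DA.updateAgent θ i v' r') s o i)
    ∧ DA.pdaExpUtil v (DA.updateAgent θ i v r) s i
        ≥ DA.pdaExpUtil v (DA.updateAgent θ i v' r') s i :=
  pda_IC_general θ s i hi v v' r r' hr hv hv'
end

section
/- CPDA is individually rational: in the combinatorial diffusion auction setting, for every buyer i with true type θ_i, every report profile θ'_{-i} of the others, and every order o ∈ O(V), if i reports truthfully then her utility under order o satisfies u_i^o = SW*(θ', o_{≼i}, π^{o≺i}) − SW*(θ', o_{≺i}, π^{o≺i}) ≥ 0. -/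
namespace DA

open scoped Classical

/-- A report profile for the combinatorial setting with item set
`K = {1, …, k}`: each agent reports a valuation over bundles (subsets of the
items) and a set of neighbors. -/
structure CProfile (V : Type*) (k : ℕ) where
  val : V → Finset (Fin k) → ℝ
  nbr : V → Set V

/-- A combinatorial valuation is valid if it is normalized: `v ∅ = 0`. -/
def CValidVal (k : ℕ) (v : Finset (Fin k) → ℝ) : Prop := v ∅ = 0

variable {V : Type*}

/-- A combinatorial profile is valid if every buyer's valuation is valid. -/
def CProfile.Valid {k : ℕ} (θ : CProfile V k) (s : V) : Prop :=
  ∀ i : V, i ≠ s → CValidVal k (θ.val i)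

/-- The reported (undirected) adjacency. -/
def CProfile.adj {k : ℕ} (θ : CProfile V k) (i j : V) : Prop :=
  j ∈ θ.nbr i ∨ i ∈ θ.nbr j

/-- The feasible set `F(θ', B)` of a coalition `B`. -/
def CProfile.feasible {k : ℕ} (θ : CProfile V k) (s : V) (B : Set V) : Set V :=
  {i | i ≠ s ∧ i ∈ B ∧ s ∈ B ∧
    Relation.ReflTransGen (fun a b => θ.adj a b ∧ a ∈ B ∧ b ∈ B) s i}

/-- Updating agent `i`'s report in a combinatorial profile. -/
def CupdateAgent [DecidableEq V] {k : ℕ} (θ : CProfile V k) (i : V)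
    (v : Finset (Fin k) → ℝ) (r : Set V) : CProfile V k :=
  ⟨Function.update θ.val i v, Function.update θ.nbr i r⟩

/-- The combinatorial profile `θ'_B` obtained by removing the reports of all
agents outside the coalition `B`. -/
noncomputable def CProfile.restrict {k : ℕ} (θ : CProfile V k) (B : Set V) :
    CProfile V k :=
  ⟨fun i q => if i ∈ B then θ.val i q else 0,
   fun i => if i ∈ B then θ.nbr i ∩ B else ∅⟩

section Combinatorial

variable [Fintype V] [DecidableEq V]

/-- Social welfare of a combinatorial allocation `π`. -/
def CSW {k : ℕ} (θ : CProfile V k) (s : V) (π : V → Finset (Fin k)) : ℝ :=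
  ∑ i ∈ Finset.univ.erase s, θ.val i (π i)

/-- The combinatorial allocations admissible for a coalition `B` with
irrevocable prior allocation `πhat`: each item goes to at most one buyer
(none to the seller), only buyers in `F(θ, B)` receive items, and every
buyer keeps at least the bundle given in `πhat`. -/
def CfeasAllocs {k : ℕ} (θ : CProfile V k) (s : V) (B : Set V)
    (πhat : V → Finset (Fin k)) : Set (V → Finset (Fin k)) :=
  {π | π s = ∅ ∧ (∀ i j, i ≠ j → Disjoint (π i) (π j)) ∧
    (∀ i, i ∉ θ.feasible s B → π i = ∅) ∧ ∀ j, j ≠ s → πhat j ⊆ π j}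

/-- `SW*(θ, B, πhat)` in the combinatorial setting. -/
noncomputable def CSWstar {k : ℕ} (θ : CProfile V k) (s : V) (B : Set V)
    (πhat : V → Finset (Fin k)) : ℝ :=
  sSup (CSW θ s '' CfeasAllocs θ s B πhat)

/-- A chosen combinatorial allocation attaining `SW*(θ, B, πhat)`. -/
noncomputable def CbestAlloc {k : ℕ} (θ : CProfile V k) (s : V) (B : Set V)
    (πhat : V → Finset (Fin k)) : V → Finset (Fin k) :=
  Classical.epsilon fun π =>
    π ∈ CfeasAllocs θ s B πhat ∧ CSW θ s π = CSWstar θ s B πhat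

/-- The partial allocation produced by CPDA after the first `t` agents of the
order `o` have been traversed. -/
noncomputable def cpdaStep {k : ℕ} (θ : CProfile V k) (s : V)
    (o : V ≃ Fin (Fintype.card V)) : ℕ → V → Finset (Fin k)
  | 0 => fun _ => ∅
  | t + 1 =>
    if h : t < Fintype.card V then
      let i := o.symm ⟨t, h⟩
      if i = s then cpdaStep θ s o t
      else Function.update (cpdaStep θ s o t) i
        (CbestAlloc θ s (predeq o i) (cpdaStep θ s o t) i)
    else cpdaStep θ s o t

/-- `π^{o≺i}` in CPDA. -/
noncomputable def cpdaPrior {k : ℕ} (θ : CProfile V k) (s : V)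
    (o : V ≃ Fin (Fintype.card V)) (i : V) : V → Finset (Fin k) :=
  cpdaStep θ s o (o i : ℕ)

/-- The final allocation produced by CPDA under the order `o`. -/
noncomputable def cpdaAlloc {k : ℕ} (θ : CProfile V k) (s : V)
    (o : V ≃ Fin (Fintype.card V)) : V → Finset (Fin k) :=
  cpdaStep θ s o (Fintype.card V)

/-- The payment charged by CPDA to agent `i` under the order `o`; agents
traversed after all items have been allocated pay `0`. -/
noncomputable def cpdaPay {k : ℕ} (θ : CProfile V k) (s : V)
    (o : V ≃ Fin (Fintype.card V)) (i : V) : ℝ :=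
  if i = s then 0
  else if Finset.univ.biUnion (cpdaPrior θ s o i) = (Finset.univ : Finset (Fin k)) then 0
  else CSWstar θ s (pred o i) (cpdaPrior θ s o i)
    - CSWstar θ s (predeq o i) (cpdaPrior θ s o i)
    + θ.val i (cpdaAlloc θ s o i)

/-- `u_i^o` in CPDA, with true valuation `v`. -/
noncomputable def cpdaUtil {k : ℕ} (v : Finset (Fin k) → ℝ) (θ : CProfile V k)
    (s : V) (o : V ≃ Fin (Fintype.card V)) (i : V) : ℝ :=
  v (cpdaAlloc θ s o i) - cpdaPay θ s o i

/-- `E_CPDA(u_i)`: expected utility over the uniformly random order. -/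
noncomputable def cpdaExpUtil {k : ℕ} (v : Finset (Fin k) → ℝ)
    (θ : CProfile V k) (s : V) (i : V) : ℝ :=
  (∑ o : V ≃ Fin (Fintype.card V), cpdaUtil v θ s o i) /
    ((Fintype.card V).factorial : ℝ)

/-- `μ(θ)` for CPDA: the fraction of orders for which no item is sold. -/
noncomputable def cmu {k : ℕ} (θ : CProfile V k) (s : V) : ℝ :=
  (Nat.card {o : V ≃ Fin (Fintype.card V) // ∀ j, cpdaAlloc θ s o j = ∅} : ℝ) /
    ((Fintype.card V).factorial : ℝ)

/-- The Shapley contribution `φ_i(θ)` of agent `i` in the combinatorial setting. -/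
noncomputable def cshapley {k : ℕ} (θ : CProfile V k) (s : V) (i : V) : ℝ :=
  ∑ B ∈ (Finset.univ.erase i).powerset,
    ((B.card.factorial * (Fintype.card V - B.card - 1).factorial : ℝ) /
      ((Fintype.card V).factorial : ℝ)) *
    (CSWstar θ s (↑(insert i B)) (fun _ => ∅) - CSWstar θ s (↑B) (fun _ => ∅))

end Combinatorial

end DA

/-!
When buyer `i` is reached, the allocation `π^{o≺i}` fixed so far is itself admissible for the
coalition `o_{≺i}`, because CPDA only ever hands out bundles to buyers already connected to the
seller through traversed agents. Admissibility only grows with the coalition, so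
`SW*(o_{≺i}) ≤ SW*(o_{≼i})`, and with truthful reports `v_i(π_i)` cancels against the payment,
leaving exactly this difference as `i`'s utility. If every item is already allocated when `i` is
reached, `π^{o≺i}` is the only admissible allocation for both coalitions, so the difference is
`0`, and `i` receives the empty bundle and pays nothing.
-/

namespace DA

variable {V : Type*} {k : ℕ}

section Feasibility

variable (θ : CProfile V k) (s : V)

lemma CProfile.feasible_mono {B B' : Set V} (h : B ⊆ B') :
    θ.feasible s B ⊆ θ.feasible s B' := by
  rintro x ⟨hxs, hxB, hsB, hpath⟩
  exact ⟨hxs, h hxB, h hsB,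
    Relation.ReflTransGen.mono (fun _ _ hab => ⟨hab.1, h hab.2.1, h hab.2.2⟩) _ _ hpath⟩

lemma cfeasAllocs_mono {B B' : Set V} (h : B ⊆ B') (πhat : V → Finset (Fin k)) :
    CfeasAllocs θ s B πhat ⊆ CfeasAllocs θ s B' πhat := by
  rintro π ⟨hs, hdisj, hsupp, hle⟩
  exact ⟨hs, hdisj, fun j hj => hsupp j fun hm => hj (θ.feasible_mono s h hm), hle⟩

lemma mem_cfeasAllocs_self_of_subset {B : Set V} {πhat π σ : V → Finset (Fin k)}
    (hπ : π ∈ CfeasAllocs θ s B πhat) (hσ : ∀ j, σ j ⊆ π j) :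
    σ ∈ CfeasAllocs θ s B σ := by
  obtain ⟨hs, hdisj, hsupp, -⟩ := hπ
  refine ⟨Finset.subset_empty.mp (hs ▸ hσ s), fun a b hab => ?_,
    fun j hj => Finset.subset_empty.mp (hsupp j hj ▸ hσ j), fun _ _ => subset_rfl⟩
  exact (hdisj a b hab).mono (hσ a) (hσ b)

variable [Fintype V] [DecidableEq V]

lemma cSWstar_mono {B B' : Set V} (h : B ⊆ B') {πhat : V → Finset (Fin k)}
    (hne : (CfeasAllocs θ s B πhat).Nonempty) :
    CSWstar θ s B πhat ≤ CSWstar θ s B' πhat :=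
  csSup_le_csSup ((Set.toFinite _).image _).bddAbove (hne.image _)
    (Set.image_mono (cfeasAllocs_mono θ s h πhat))

lemma cbestAlloc_mem {B : Set V} {πhat : V → Finset (Fin k)}
    (hne : (CfeasAllocs θ s B πhat).Nonempty) :
    CbestAlloc θ s B πhat ∈ CfeasAllocs θ s B πhat := by
  obtain ⟨π, hπ, hSW⟩ := (hne.image (CSW θ s)).csSup_mem ((Set.toFinite _).image _)
  exact (Classical.epsilon_spec (p := fun π => π ∈ CfeasAllocs θ s B πhat ∧
    CSW θ s π = CSWstar θ s B πhat) ⟨π, hπ, hSW⟩).1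

lemma cfeasAllocs_eq_singleton {B : Set V} {πhat : V → Finset (Fin k)}
    (hπhat : πhat ∈ CfeasAllocs θ s B πhat) (hfull : Finset.univ.biUnion πhat = Finset.univ) :
    CfeasAllocs θ s B πhat = {πhat} := by
  refine Set.eq_singleton_iff_unique_mem.mpr ⟨hπhat, ?_⟩
  rintro π ⟨hs, hdisj, -, hle⟩
  funext j
  refine subset_antisymm (fun l hl => ?_) ?_
  · obtain ⟨j', -, hlj'⟩ := Finset.mem_biUnion.mp (hfull ▸ Finset.mem_univ l)
    have hj's : j' ≠ s := by
      rintro rfl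
      simp [hπhat.1] at hlj'
    obtain rfl : j = j' := by
      by_contra hne
      exact Finset.disjoint_left.mp (hdisj j j' hne) hl (hle j' hj's hlj')
    exact hlj'
  · rcases eq_or_ne j s with rfl | hjs
    · rw [hπhat.1, hs]
    · exact hle j hjs

lemma cSWstar_eq_of_biUnion_eq_univ {B : Set V} {πhat : V → Finset (Fin k)}
    (hπhat : πhat ∈ CfeasAllocs θ s B πhat) (hfull : Finset.univ.biUnion πhat = Finset.univ) :
    CSWstar θ s B πhat = CSW θ s πhat := by
  rw [CSWstar, cfeasAllocs_eq_singleton θ s hπhat hfull, Set.image_singleton, csSup_singleton]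

end Feasibility

section Traversal

variable [Fintype V] (θ : CProfile V k) (s : V) (o : V ≃ Fin (Fintype.card V))

lemma predeq_eq_lt_succ (i : V) : predeq o i = {x | (o x : ℕ) < o i + 1} :=
  Set.ext fun _ => Nat.lt_succ_iff.symm

lemma pred_subset_predeq (i : V) : pred o i ⊆ predeq o i :=
  fun _ hx => le_of_lt (α := Fin _) hx

variable [DecidableEq V]

lemma cpdaStep_succ_of_not_buyer {t : ℕ} (ht : ∀ j, (o j : ℕ) = t → j = s) :
    cpdaStep θ s o (t + 1) = cpdaStep θ s o t := by
  by_cases h : t < Fintype.card V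
  · simp [cpdaStep, h, ht (o.symm ⟨t, h⟩) (by simp)]
  · simp [cpdaStep, h]

lemma cpdaStep_succ_of_buyer {j : V} (hj : j ≠ s) :
    cpdaStep θ s o (o j + 1) = Function.update (cpdaStep θ s o (o j)) j
      (CbestAlloc θ s (predeq o j) (cpdaStep θ s o (o j)) j) := by
  simp [cpdaStep, hj]

lemma cpdaStep_mem_cfeasAllocs (t : ℕ) :
    cpdaStep θ s o t ∈ CfeasAllocs θ s {x | (o x : ℕ) < t} (cpdaStep θ s o t) := by
  induction t with
  | zero => exact ⟨rfl, fun _ _ _ => Finset.disjoint_empty_left _, fun _ _ => rfl,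
      fun _ _ => subset_rfl⟩
  | succ t ih =>
    have hsub : {x | (o x : ℕ) < t} ⊆ {x | (o x : ℕ) < t + 1} := fun x hx => Nat.lt_succ_of_lt hx
    by_cases hbuyer : ∃ i, (o i : ℕ) = t ∧ i ≠ s
    · obtain ⟨i, rfl, hi⟩ := hbuyer
      set π := CbestAlloc θ s (predeq o i) (cpdaStep θ s o (o i))
      have hπ : π ∈ CfeasAllocs θ s {x | (o x : ℕ) < o i + 1} (cpdaStep θ s o (o i)) := by
        rw [← predeq_eq_lt_succ o i]
        exact cbestAlloc_mem θ s
          ⟨_, cfeasAllocs_mono θ s (predeq_eq_lt_succ o i ▸ hsub) _ ih⟩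
      rw [cpdaStep_succ_of_buyer θ s o hi]
      refine mem_cfeasAllocs_self_of_subset θ s hπ fun j => ?_
      rcases eq_or_ne j i with rfl | hji
      · rw [Function.update_self]
      · rw [Function.update_of_ne hji]
        rcases eq_or_ne j s with rfl | hjs
        · rw [ih.1]; exact Finset.empty_subset _
        · exact hπ.2.2.2 j hjs
    · push Not at hbuyer
      rw [cpdaStep_succ_of_not_buyer θ s o hbuyer]
      exact mem_cfeasAllocs_self_of_subset θ s (cfeasAllocs_mono θ s hsub _ ih) fun _ => subset_rfl

lemma cpdaPrior_mem_cfeasAllocs_pred (i : V) :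
    cpdaPrior θ s o i ∈ CfeasAllocs θ s (pred o i) (cpdaPrior θ s o i) :=
  cpdaStep_mem_cfeasAllocs θ s o _

lemma cpdaStep_apply_of_le {i : V} {t : ℕ} (ht : (o i : ℕ) + 1 ≤ t) :
    cpdaStep θ s o t i = cpdaStep θ s o ((o i : ℕ) + 1) i := by
  induction t, ht using Nat.le_induction with
  | base => rfl
  | succ t hit ih =>
    rw [← ih]
    by_cases hbuyer : ∃ j, (o j : ℕ) = t ∧ j ≠ s
    · obtain ⟨j, rfl, hj⟩ := hbuyer
      have hij : i ≠ j := by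
        rintro rfl
        omega
      rw [cpdaStep_succ_of_buyer θ s o hj, Function.update_of_ne hij]
    · push Not at hbuyer
      rw [cpdaStep_succ_of_not_buyer θ s o hbuyer]

lemma cpdaAlloc_eq_cbestAlloc {i : V} (hi : i ≠ s) :
    cpdaAlloc θ s o i = CbestAlloc θ s (predeq o i) (cpdaPrior θ s o i) i := by
  rw [cpdaAlloc, cpdaStep_apply_of_le θ s o (o i).isLt, cpdaStep_succ_of_buyer θ s o hi,
    Function.update_self, cpdaPrior]

end Traversal

end DA

theorem cpda_IR_general {V : Type*} [Fintype V] [DecidableEq V]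
    {k : ℕ} (θ : DA.CProfile V k) (s : V) (hθ : θ.Valid s)
    (i : V) (hi : i ≠ s) (o : V ≃ Fin (Fintype.card V)) :
    DA.cpdaUtil (θ.val i) θ s o i
      = DA.CSWstar θ s (DA.predeq o i) (DA.cpdaPrior θ s o i)
        - DA.CSWstar θ s (DA.pred o i) (DA.cpdaPrior θ s o i)
    ∧ 0 ≤ DA.cpdaUtil (θ.val i) θ s o i := by
  have hpred := DA.cpdaPrior_mem_cfeasAllocs_pred θ s o i
  have hpredeq := DA.cfeasAllocs_mono θ s (DA.pred_subset_predeq o i) _ hpred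
  rw [DA.cpdaUtil, DA.cpdaPay, if_neg hi]
  split_ifs with hfull
  · have hempty : DA.cpdaAlloc θ s o i = ∅ := by
      have hbest := DA.cbestAlloc_mem θ s ⟨_, hpredeq⟩
      rw [DA.cfeasAllocs_eq_singleton θ s hpredeq hfull, Set.mem_singleton_iff] at hbest
      rw [DA.cpdaAlloc_eq_cbestAlloc θ s o hi, hbest]
      exact hpred.2.2.1 i fun h => lt_irrefl (o i) h.2.1
    rw [hempty, hθ i hi, DA.cSWstar_eq_of_biUnion_eq_univ θ s hpred hfull,
      DA.cSWstar_eq_of_biUnion_eq_univ θ s hpredeq hfull]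
    norm_num
  · have hmono := DA.cSWstar_mono θ s (DA.pred_subset_predeq o i) ⟨_, hpred⟩
    exact ⟨by ring, by linarith⟩

/-- CPDA is individually rational: in the combinatorial setting,
for every buyer i reporting truthfully, every report profile of the others, and
every order o, her utility under order o satisfies
u_i^o = SW*(θ', o_{≼i}, π^{o≺i}) − SW*(θ', o_{≺i}, π^{o≺i}) ≥ 0. -/
theorem cpda_IR {V : Type*} [Fintype V] [DecidableEq V]
    {k : ℕ} (hk : 1 ≤ k) (θ : DA.CProfile V k) (s : V) (hθ : θ.Valid s)
    (i : V) (hi : i ≠ s) (o : V ≃ Fin (Fintype.card V)) :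
    DA.cpdaUtil (θ.val i) θ s o i
      = DA.CSWstar θ s (DA.predeq o i) (DA.cpdaPrior θ s o i)
        - DA.CSWstar θ s (DA.pred o i) (DA.cpdaPrior θ s o i)
    ∧ 0 ≤ DA.cpdaUtil (θ.val i) θ s o i :=
  cpda_IR_general θ s hθ i hi o
end
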